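/- Let n ∈ ℕ with n ≥ 1, U > 0, and set the grid side length r := √d · n² · U. For any two points p, q ∈ ℝ^d, if the shift t is drawn uniformly at random from [0, r)^d, then the probability that p and q lie in different grid cells is at most ‖p - q‖₂ / (n² · U). -/

import Mathlib

/-!
In one dimension the shifted grid of side `r` separates `a ≤ b` only if the shift lies in
`(a, b] - k r` for some integer `k`. Cut down to `[0, r)` and translated back by `k r`, these
pieces are the parts of `(a, b]` in the disjoint cells `[k r, (k + 1) r)`, so a uniform shift
separates `a` and `b` with probability at most `|a - b| / r`. A union bound over the coordinates
bounds the separation probability of `p, q` by `‖p - q‖₁ / r ≤ √d ‖p - q‖₂ / r`.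
-/

open MeasureTheory Set

lemma setOf_floor_sub_div_ne_subset {r : ℝ} (hr : 0 < r) {a b : ℝ} (hab : a ≤ b) :
    {s : ℝ | ⌊(a - s) / r⌋ ≠ ⌊(b - s) / r⌋} ⊆ ⋃ k : ℤ, Ioc (a - k • r) (b - k • r) := by
  intro s hs
  have hlt : ⌊(a - s) / r⌋ < ⌊(b - s) / r⌋ :=
    (Int.floor_le_floor (by gcongr)).lt_of_ne hs
  refine mem_iUnion.2 ⟨⌊(b - s) / r⌋, ?_, ?_⟩
  · have := Int.floor_lt.1 hlt
    rw [div_lt_iff₀ hr] at this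
    rw [zsmul_eq_mul]; linarith
  · have := Int.floor_le ((b - s) / r)
    rw [le_div_iff₀ hr] at this
    rw [zsmul_eq_mul]; linarith

lemma volume_Ico_inter_iUnion_Ioc_sub_zsmul_le {r : ℝ} (hr : 0 < r) (a b : ℝ) :
    volume (Ico 0 r ∩ ⋃ k : ℤ, Ioc (a - k • r) (b - k • r)) ≤ ENNReal.ofReal (b - a) :=
  calc volume (Ico 0 r ∩ ⋃ k : ℤ, Ioc (a - k • r) (b - k • r))
      ≤ ∑' k : ℤ, volume (Ico 0 r ∩ Ioc (a - k • r) (b - k • r)) := by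
        rw [inter_iUnion]; exact measure_iUnion_le _
    _ = ∑' k : ℤ, volume (Ioc a b ∩ Ico (k • r) ((k + 1) • r)) := by
        refine tsum_congr fun k => ?_
        rw [← measure_preimage_add_right volume (k • r) (Ioc a b ∩ _)]
        congr 1
        ext s
        simp only [mem_inter_iff, mem_Ico, mem_Ioc, mem_preimage, add_smul, one_smul]
        constructor <;> rintro ⟨⟨_, _⟩, _, _⟩ <;> refine ⟨⟨?_, ?_⟩, ?_, ?_⟩ <;> linarith
    _ = volume (Ioc a b) := by
        rw [← measure_iUnion, ← inter_iUnion, iUnion_Ico_zsmul hr, inter_univ]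
        · exact fun m n hmn =>
            (pairwise_disjoint_Ico_zsmul r hmn).mono inter_subset_right inter_subset_right
        · exact fun k => measurableSet_Ioc.inter measurableSet_Ico
    _ = ENNReal.ofReal (b - a) := Real.volume_Ioc

lemma volume_Ico_inter_floor_sub_div_ne_le {r : ℝ} (hr : 0 < r) (a b : ℝ) :
    volume (Ico 0 r ∩ {s : ℝ | ⌊(a - s) / r⌋ ≠ ⌊(b - s) / r⌋}) ≤ ENNReal.ofReal |a - b| := by
  wlog hab : a ≤ b generalizing a b
  · simpa only [ne_comm, abs_sub_comm] using this b a (le_of_not_ge hab)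
  rw [abs_sub_comm, abs_of_nonneg (sub_nonneg.2 hab)]
  exact (measure_mono (inter_subset_inter_right _ (setOf_floor_sub_div_ne_subset hr hab))).trans
    (volume_Ico_inter_iUnion_Ioc_sub_zsmul_le hr a b)

variable {ι : Type*}

lemma EuclideanSpace.setOf_forall_apply_mem_eq_preimage (A : ι → Set ℝ) :
    {t : EuclideanSpace ℝ ι | ∀ j, t j ∈ A j}
      = (MeasurableEquiv.toLp 2 (ι → ℝ)).symm ⁻¹' univ.pi A := by
  ext; simp

variable [Fintype ι]

lemma EuclideanSpace.sum_abs_le_sqrt_card_mul_norm (x : EuclideanSpace ℝ ι) :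
    ∑ i, |x i| ≤ √(Fintype.card ι) * ‖x‖ := by
  rw [EuclideanSpace.norm_eq, ← Real.sqrt_mul (Nat.cast_nonneg _)]
  refine Real.le_sqrt_of_sq_le ?_
  simpa [Real.norm_eq_abs, sq_abs] using
    sq_sum_le_card_mul_sum_sq (s := Finset.univ) (f := fun i => |x i|)

lemma EuclideanSpace.volume_setOf_forall_apply_mem (A : ι → Set ℝ) :
    volume {t : EuclideanSpace ℝ ι | ∀ j, t j ∈ A j} = ∏ j, volume (A j) := by
  rw [setOf_forall_apply_mem_eq_preimage,
    (volume_preserving_symm_measurableEquiv_toLp ι).measure_preimage_equiv, volume_pi_pi]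

lemma EuclideanSpace.measurableSet_setOf_forall_apply_mem {A : ι → Set ℝ}
    (hA : ∀ j, MeasurableSet (A j)) : MeasurableSet {t : EuclideanSpace ℝ ι | ∀ j, t j ∈ A j} := by
  rw [setOf_forall_apply_mem_eq_preimage]
  exact (MeasurableSet.univ_pi hA).preimage (MeasurableEquiv.measurable _)

lemma smul_restrict_cube_setOf_apply_mem {r : ℝ} (hr : 0 < r) (i : ι) (B : Set ℝ) :
    ((ENNReal.ofReal (r ^ Fintype.card ι))⁻¹ •
        volume.restrict {t : EuclideanSpace ℝ ι | ∀ j, t j ∈ Ico 0 r}) {t | t i ∈ B}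
      = (ENNReal.ofReal r)⁻¹ * volume (Ico 0 r ∩ B) := by
  classical
  have hside : volume (Ico 0 r) = ENNReal.ofReal r := by rw [Real.volume_Ico, sub_zero]
  set R := ENNReal.ofReal r
  set P := ∏ j ∈ Finset.univ.erase i, R
  have hR : R ≠ 0 := ENNReal.ofReal_ne_zero_iff.2 hr
  have hP : P ≠ 0 := Finset.prod_ne_zero_iff.2 fun _ _ => hR
  have hP' : P ≠ ⊤ := ENNReal.prod_ne_top fun _ _ => ENNReal.ofReal_ne_top
  have hcube : ENNReal.ofReal (r ^ Fintype.card ι) = R * P := by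
    rw [ENNReal.ofReal_pow hr.le, ← Finset.card_univ, ← Finset.prod_const,
      Finset.mul_prod_erase _ (fun _ => R) (Finset.mem_univ i)]
  have hslab : {t : EuclideanSpace ℝ ι | t i ∈ B} ∩ {t | ∀ j, t j ∈ Ico 0 r}
      = {t | ∀ j, t j ∈ Function.update (fun _ => Ico 0 r) i (Ico 0 r ∩ B) j} := by
    ext t
    simp only [mem_inter_iff, mem_ofPred_eq]
    rw [Function.forall_update_iff _ fun j s => t j ∈ s, mem_inter_iff]
    exact ⟨fun ⟨hB, hI⟩ => ⟨⟨hI i, hB⟩, fun j _ => hI j⟩,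
      fun ⟨⟨hIi, hB⟩, hI⟩ => ⟨hB, fun j => (eq_or_ne j i).elim (· ▸ hIi) (hI j)⟩⟩
  rw [Measure.smul_apply, smul_eq_mul, Measure.restrict_apply'
      (EuclideanSpace.measurableSet_setOf_forall_apply_mem fun _ => measurableSet_Ico),
    hslab, EuclideanSpace.volume_setOf_forall_apply_mem,
    ← Finset.mul_prod_erase _ _ (Finset.mem_univ i), Function.update_self,
    Finset.prod_congr rfl fun j hj => by
      rw [Function.update_of_ne (Finset.ne_of_mem_erase hj), hside],
    hcube, ENNReal.mul_inv (Or.inl hR) (Or.inr hP)]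
  change R⁻¹ * P⁻¹ * (_ * P) = _
  rw [mul_comm _ P, ← mul_assoc, mul_assoc R⁻¹, ENNReal.inv_mul_cancel hP hP', mul_one]

lemma measure_shiftedGrid_separates_le {r : ℝ} (hr : 0 < r) (p q : EuclideanSpace ℝ ι) :
    ((ENNReal.ofReal (r ^ Fintype.card ι))⁻¹ •
        volume.restrict {t : EuclideanSpace ℝ ι | ∀ j, t j ∈ Ico 0 r})
      {t | ∃ i, ⌊(p i - t i) / r⌋ ≠ ⌊(q i - t i) / r⌋}
      ≤ ENNReal.ofReal (√(Fintype.card ι) * ‖p - q‖ / r) :=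
  calc _ ≤ ∑ i, ((ENNReal.ofReal (r ^ Fintype.card ι))⁻¹ •
          volume.restrict {t : EuclideanSpace ℝ ι | ∀ j, t j ∈ Ico 0 r})
          {t | t i ∈ {s | ⌊(p i - s) / r⌋ ≠ ⌊(q i - s) / r⌋}} := by
        rw [ofPred_exists]; exact measure_iUnion_fintype_le _ _
    _ = ∑ i, (ENNReal.ofReal r)⁻¹ *
          volume (Ico 0 r ∩ {s | ⌊(p i - s) / r⌋ ≠ ⌊(q i - s) / r⌋}) := by
        simp only [smul_restrict_cube_setOf_apply_mem hr]
    _ ≤ ∑ i, (ENNReal.ofReal r)⁻¹ * ENNReal.ofReal |(p - q) i| := by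
        gcongr with i
        exact volume_Ico_inter_floor_sub_div_ne_le hr _ _
    _ = ENNReal.ofReal ((∑ i, |(p - q) i|) / r) := by
        rw [← Finset.mul_sum, ← ENNReal.ofReal_sum_of_nonneg fun _ _ => abs_nonneg _,
          ENNReal.ofReal_div_of_pos hr, ENNReal.div_eq_inv_mul]
    _ ≤ ENNReal.ofReal (√(Fintype.card ι) * ‖p - q‖ / r) := by
        gcongr; exact EuclideanSpace.sum_abs_le_sqrt_card_mul_norm (p - q)

/-- Lemma 5.2, quadtreeSep. For `n ≥ 1`, `U > 0` and grid side length
`r = √d · n² · U`, if the shift `t` is drawn uniformly at random from `[0, r)^d`, the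
probability that `p, q ∈ ℝ^d` lie in different grid cells is at most `‖p - q‖₂ / (n² · U)`. -/
theorem quadtree_separation (d n : ℕ) (hn : 1 ≤ n) (U : ℝ) (hU : 0 < U)
    (p q : EuclideanSpace ℝ (Fin d)) :
    ((ENNReal.ofReal ((Real.sqrt d * n ^ 2 * U) ^ d))⁻¹ •
        volume.restrict
          {t : EuclideanSpace ℝ (Fin d) | ∀ i, t i ∈ Set.Ico (0 : ℝ) (Real.sqrt d * n ^ 2 * U)})
      {t : EuclideanSpace ℝ (Fin d) |
        ∃ i, ⌊(p i - t i) / (Real.sqrt d * n ^ 2 * U)⌋ ≠ ⌊(q i - t i) / (Real.sqrt d * n ^ 2 * U)⌋}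
      ≤ ENNReal.ofReal (‖p - q‖ / (n ^ 2 * U)) := by
  rcases Nat.eq_zero_or_pos d with rfl | hd
  · simp
  have hsqrt : 0 < √(d : ℝ) := by positivity
  have hn' : (0 : ℝ) < n := by exact_mod_cast hn
  calc _ ≤ ENNReal.ofReal (√d * ‖p - q‖ / (√d * n ^ 2 * U)) := by
        simpa only [Fintype.card_fin] using
          measure_shiftedGrid_separates_le (by positivity : 0 < √d * n ^ 2 * U) p q
    _ = ENNReal.ofReal (‖p - q‖ / (n ^ 2 * U)) := by
        rw [mul_assoc _ _ U, mul_div_mul_left _ _ hsqrt.ne']
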